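/- arXiv:1309.5292 — 5 statements merged into one kernel-verified Lean document; each statement's English description precedes it below -/
import Mathlib

section
/- Let n ≥ c ≥ 1 and m ≥ 1. Then there exists a family 𝒳 = (X₁,…,X_m) ∈ S(n,m,c) such that Δ(𝒳) = f_c(n,m) and |X_i| = c for every i = 1,…,m. -/
open Finset

/-- The union of the first `k` sets in the ordering `π` (positions `1,…,k`,
i.e. 0-based indices `< k`). -/
def unionUpTo {α : Type*} [DecidableEq α] {m : ℕ} (X : Fin m → Finset α)
    (π : Equiv.Perm (Fin m)) (k : ℕ) : Finset α :=
  (Finset.univ.filter (fun i : Fin m => (i : ℕ) < k)).biUnion (fun i => X (π i))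

/-- `Δ(𝒳,π,k) = |X_{π(1)} ∪ ⋯ ∪ X_{π(k)}| − k`. -/
def delta {α : Type*} [DecidableEq α] {m : ℕ} (X : Fin m → Finset α)
    (π : Equiv.Perm (Fin m)) (k : ℕ) : ℤ :=
  ((unionUpTo X π k).card : ℤ) - k

/-- `Δ(𝒳,π) = max_{1 ≤ k ≤ m} Δ(𝒳,π,k)`. -/
noncomputable def DeltaPerm {α : Type*} [DecidableEq α] {m : ℕ} (X : Fin m → Finset α)
    (π : Equiv.Perm (Fin m)) : ℤ :=
  sSup {d : ℤ | ∃ k : ℕ, 1 ≤ k ∧ k ≤ m ∧ d = delta X π k}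

/-- `Δ(𝒳) = min_π Δ(𝒳,π)`. -/
noncomputable def DeltaMin {α : Type*} [DecidableEq α] {m : ℕ} (X : Fin m → Finset α) : ℤ :=
  sInf {d : ℤ | ∃ π : Equiv.Perm (Fin m), d = DeltaPerm X π}

/-- `f_c(n,m) = max_{𝒳 ∈ S(n,m,c)} Δ(𝒳)`, families of `m` subsets of an
`n`-element ground set, each of size at most `c`. -/
noncomputable def fFam (n m c : ℕ) : ℤ :=
  sSup {d : ℤ | ∃ X : Fin m → Finset (Fin n), (∀ i, (X i).card ≤ c) ∧ d = DeltaMin X}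

section Aux
variable {α : Type*} [DecidableEq α] {m : ℕ}

lemma deltaSet_finite (X : Fin m → Finset α) (π : Equiv.Perm (Fin m)) :
    {d : ℤ | ∃ k : ℕ, 1 ≤ k ∧ k ≤ m ∧ d = delta X π k}.Finite := by
  apply Set.Finite.subset ((Set.finite_Icc 1 m).image (delta X π))
  rintro d ⟨k, h1, h2, rfl⟩
  exact ⟨k, ⟨h1, h2⟩, rfl⟩

lemma deltaSet_nonempty (hm : 1 ≤ m) (X : Fin m → Finset α) (π : Equiv.Perm (Fin m)) :
    {d : ℤ | ∃ k : ℕ, 1 ≤ k ∧ k ≤ m ∧ d = delta X π k}.Nonempty :=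
  ⟨delta X π 1, 1, le_refl 1, hm, rfl⟩

lemma permSet_finite (X : Fin m → Finset α) :
    {d : ℤ | ∃ π : Equiv.Perm (Fin m), d = DeltaPerm X π}.Finite := by
  have h : {d : ℤ | ∃ π : Equiv.Perm (Fin m), d = DeltaPerm X π}
      = Set.range (DeltaPerm X) := by
    ext d; simp [eq_comm]
  rw [h]; exact Set.finite_range _

lemma delta_mono {X Y : Fin m → Finset α} (h : ∀ i, X i ⊆ Y i)
    (π : Equiv.Perm (Fin m)) (k : ℕ) : delta X π k ≤ delta Y π k := by
  unfold delta
  have hsub : unionUpTo X π k ⊆ unionUpTo Y π k := by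
    unfold unionUpTo
    apply Finset.biUnion_subset.2
    intro i hi
    exact (h (π i)).trans (Finset.subset_biUnion_of_mem (fun i => Y (π i)) hi)
  have := Finset.card_le_card hsub
  omega

lemma DeltaPerm_mono (hm : 1 ≤ m) {X Y : Fin m → Finset α} (h : ∀ i, X i ⊆ Y i)
    (π : Equiv.Perm (Fin m)) : DeltaPerm X π ≤ DeltaPerm Y π := by
  apply csSup_le (deltaSet_nonempty hm X π)
  rintro d ⟨k, h1, h2, rfl⟩
  exact (delta_mono h π k).trans
    (le_csSup (deltaSet_finite Y π).bddAbove ⟨k, h1, h2, rfl⟩)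

lemma DeltaMin_mono (hm : 1 ≤ m) {X Y : Fin m → Finset α} (h : ∀ i, X i ⊆ Y i) :
    DeltaMin X ≤ DeltaMin Y := by
  unfold DeltaMin
  apply le_csInf ⟨DeltaPerm Y 1, Set.mem_setOf.mpr ⟨1, rfl⟩⟩
  rintro d ⟨π, rfl⟩
  exact (csInf_le (permSet_finite X).bddBelow ⟨π, rfl⟩).trans (DeltaPerm_mono hm h π)

end Aux

/-- For `n ≥ c ≥ 1` and `m ≥ 1` there is a family `𝒳 ∈ S(n,m,c)` with
`Δ(𝒳) = f_c(n,m)` whose members all have exactly `c` elements. -/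
theorem exists_extremal_family_full_sets (n m c : ℕ) (hc : 1 ≤ c) (hcn : c ≤ n)
    (hm : 1 ≤ m) :
    ∃ X : Fin m → Finset (Fin n),
      (∀ i, (X i).card ≤ c) ∧ DeltaMin X = fFam n m c ∧ ∀ i, (X i).card = c := by
  set D : Set ℤ :=
    {d : ℤ | ∃ X : Fin m → Finset (Fin n), (∀ i, (X i).card ≤ c) ∧ d = DeltaMin X} with hD
  have hfin : D.Finite := by
    apply Set.Finite.subset (Set.finite_range (DeltaMin (m := m) (α := Fin n)))
    rintro d ⟨X, _, rfl⟩
    exact ⟨X, rfl⟩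
  have hne : D.Nonempty :=
    ⟨DeltaMin (fun _ : Fin m => (∅ : Finset (Fin n))),
      fun _ : Fin m => (∅ : Finset (Fin n)), fun i => by simp, rfl⟩
  have hmem : fFam n m c ∈ D := hne.csSup_mem hfin
  obtain ⟨X0, hX0c, hX0⟩ := hmem
  have hY : ∀ i, ∃ Y : Finset (Fin n), X0 i ⊆ Y ∧ Y.card = c := by
    intro i
    apply Finset.exists_superset_card_eq (hX0c i)
    simp [hcn]
  choose Y hY1 hY3 using hY
  refine ⟨Y, fun i => (hY3 i).le, le_antisymm ?_ ?_, hY3⟩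
  · exact le_csSup hfin.bddAbove ⟨Y, fun i => (hY3 i).le, rfl⟩
  · rw [hX0]
    exact DeltaMin_mono hm hY1
end

section
/- Let 𝒳 = (X₁,…,X_m) be a family of subsets of a finite ground set with |X_i| ≤ 2 for all i. Then there exists a standard ordering π of 𝒳 such that Δ(𝒳,π) = Δ(𝒳). -/
set_option linter.unusedSectionVars false


open Finset

/-- A standard ordering: for each `t` with `1 ≤ t < m`, the set placed at
position `t+1` minimizes `|X_j \ (X_{π(1)} ∪ ⋯ ∪ X_{π(t)})|` over all not yet
ordered sets. -/
def IsStandardOrdering {α : Type*} [DecidableEq α] {m : ℕ} (X : Fin m → Finset α)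
    (π : Equiv.Perm (Fin m)) : Prop :=
  ∀ (t : ℕ) (ht : t < m), 1 ≤ t →
    ∀ j : Fin m, (∀ i : Fin m, (i : ℕ) < t → π i ≠ j) →
      (X (π ⟨t, ht⟩) \ unionUpTo X π t).card ≤ (X j \ unionUpTo X π t).card


section Aux

variable {α : Type*} [DecidableEq α] {m : ℕ}

def prefIdx (m k : ℕ) : Finset (Fin m) := univ.filter (fun i : Fin m => (i : ℕ) < k)

lemma mem_prefIdx {k : ℕ} {i : Fin m} : i ∈ prefIdx m k ↔ (i : ℕ) < k := by
  simp [prefIdx]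

lemma card_prefIdx {k : ℕ} (hk : k ≤ m) : (prefIdx m k).card = k := by
  have h : prefIdx m k = Finset.attachFin (Finset.range k)
      (fun a ha => lt_of_lt_of_le (Finset.mem_range.mp ha) hk) := by
    ext i; simp [prefIdx, Finset.mem_attachFin]
  rw [h, Finset.card_attachFin, Finset.card_range]

lemma unionUpTo_eq (X : Fin m → Finset α) (π : Equiv.Perm (Fin m)) (k : ℕ) :
    unionUpTo X π k = ((prefIdx m k).image π).biUnion X := by
  rw [unionUpTo, Finset.image_biUnion]; rfl

lemma unionUpTo_mono (X : Fin m → Finset α) (π : Equiv.Perm (Fin m)) {k k' : ℕ} (h : k ≤ k') :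
    unionUpTo X π k ⊆ unionUpTo X π k' := by
  apply Finset.biUnion_subset_biUnion_of_subset_left
  intro i hi
  simp only [Finset.mem_filter, Finset.mem_univ, true_and] at hi ⊢
  omega

variable [Fintype α]

lemma bddAbove_deltaSet (X : Fin m → Finset α) (π : Equiv.Perm (Fin m)) :
    BddAbove {d : ℤ | ∃ k : ℕ, 1 ≤ k ∧ k ≤ m ∧ d = delta X π k} := by
  refine ⟨(Fintype.card α : ℤ), ?_⟩
  rintro d ⟨k, hk1, hk2, rfl⟩
  have h1 : (unionUpTo X π k).card ≤ Fintype.card α :=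
    (Finset.card_le_univ _).trans_eq Finset.card_univ
  have h2 : ((unionUpTo X π k).card : ℤ) ≤ (Fintype.card α : ℤ) := by exact_mod_cast h1
  unfold delta
  omega

lemma delta_le_DeltaPerm (X : Fin m → Finset α) (π : Equiv.Perm (Fin m)) {k : ℕ}
    (h1 : 1 ≤ k) (h2 : k ≤ m) : delta X π k ≤ DeltaPerm X π :=
  le_csSup (bddAbove_deltaSet X π) ⟨k, h1, h2, rfl⟩

lemma DeltaPerm_le (hm : 1 ≤ m) (X : Fin m → Finset α) (π : Equiv.Perm (Fin m)) {B : ℤ}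
    (h : ∀ k, 1 ≤ k → k ≤ m → delta X π k ≤ B) : DeltaPerm X π ≤ B :=
  csSup_le ⟨delta X π m, m, hm, le_refl m, rfl⟩ (by rintro d ⟨k, h1, h2, rfl⟩; exact h k h1 h2)

lemma neg_le_DeltaPerm (hm : 1 ≤ m) (X : Fin m → Finset α) (π : Equiv.Perm (Fin m)) :
    -(m : ℤ) ≤ DeltaPerm X π := by
  refine le_trans ?_ (delta_le_DeltaPerm X π hm (le_refl m))
  unfold delta
  have : (0 : ℤ) ≤ ((unionUpTo X π m).card : ℤ) := Int.natCast_nonneg _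
  omega

lemma DeltaMin_le (hm : 1 ≤ m) (X : Fin m → Finset α) (π : Equiv.Perm (Fin m)) :
    DeltaMin X ≤ DeltaPerm X π :=
  csInf_le ⟨-(m : ℤ), by rintro d ⟨σ, rfl⟩; exact neg_le_DeltaPerm hm X σ⟩ ⟨π, rfl⟩

lemma exists_optimal (hm : 1 ≤ m) (X : Fin m → Finset α) :
    ∃ π : Equiv.Perm (Fin m), DeltaPerm X π = DeltaMin X := by
  have h := Int.csInf_mem (s := {d : ℤ | ∃ π : Equiv.Perm (Fin m), d = DeltaPerm X π})
    ⟨DeltaPerm X 1, 1, rfl⟩ ⟨-(m : ℤ), by rintro d ⟨σ, rfl⟩; exact neg_le_DeltaPerm hm X σ⟩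
  obtain ⟨π, hπ⟩ := h
  exact ⟨π, hπ.symm⟩

end Aux

section Cyc

variable {m : ℕ}

def cycFun (m t s : ℕ) (hs : s < m) : Fin m → Fin m := fun i =>
  if (i : ℕ) = t then ⟨s, hs⟩
  else if t < (i : ℕ) ∧ (i : ℕ) ≤ s then ⟨(i : ℕ) - 1, by omega⟩
  else i

lemma cycFun_injective (t s : ℕ) (hts : t < s) (hs : s < m) :
    Function.Injective (cycFun m t s hs) := by
  intro i j hij
  have h := congrArg Fin.val hij
  unfold cycFun at h
  have hi := i.isLt
  have hj := j.isLt
  apply Fin.ext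
  split_ifs at h <;> simp_all <;> omega

noncomputable def cyc (t s : ℕ) (hts : t < s) (hs : s < m) : Equiv.Perm (Fin m) :=
  Equiv.ofBijective _ (Finite.injective_iff_bijective.mp (cycFun_injective t s hts hs))

lemma cyc_apply (t s : ℕ) (hts : t < s) (hs : s < m) (i : Fin m) :
    cyc t s hts hs i = cycFun m t s hs i := rfl

lemma cyc_apply_lt (t s : ℕ) (hts : t < s) (hs : s < m) (i : Fin m) (h : (i : ℕ) < t) :
    cyc t s hts hs i = i := by
  rw [cyc_apply]; unfold cycFun; rw [if_neg (by omega), if_neg (by omega)]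

lemma cyc_apply_t (t s : ℕ) (hts : t < s) (hs : s < m) (i : Fin m) (h : (i : ℕ) = t) :
    cyc t s hts hs i = ⟨s, hs⟩ := by
  rw [cyc_apply]; unfold cycFun; rw [if_pos h]

end Cyc

section Img

variable {α : Type*} [DecidableEq α] {m : ℕ}

lemma image_cyc_of_le {t s k : ℕ} (hts : t < s) (hs : s < m) (hk : k ≤ t) :
    (prefIdx m k).image (cyc t s hts hs) = prefIdx m k := by
  have h : ∀ i ∈ prefIdx m k, cyc t s hts hs i = i := fun i hi =>
    cyc_apply_lt t s hts hs i (lt_of_lt_of_le (mem_prefIdx.mp hi) hk)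
  rw [Finset.image_congr (g := id) (fun i hi => h i hi), Finset.image_id]

lemma image_cyc_of_gt {t s k : ℕ} (hts : t < s) (hs : s < m) (hk : s < k) :
    (prefIdx m k).image (cyc t s hts hs) = prefIdx m k := by
  apply Finset.eq_of_subset_of_card_le
  · intro j hj
    obtain ⟨i, hi, rfl⟩ := Finset.mem_image.mp hj
    rw [mem_prefIdx] at hi
    rw [cyc_apply]
    unfold cycFun
    split_ifs <;> rw [mem_prefIdx] <;> (try simp only [Fin.val_mk]) <;> omega
  · exact le_of_eq (Finset.card_image_of_injective _ (Equiv.injective _)).symm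

lemma image_cyc_mid {t s k : ℕ} (hts : t < s) (hs : s < m) (hk1 : t < k) (hk2 : k ≤ s) :
    (prefIdx m k).image (cyc t s hts hs) = insert ⟨s, hs⟩ (prefIdx m (k - 1)) := by
  apply Finset.eq_of_subset_of_card_le
  · intro j hj
    obtain ⟨i, hi, rfl⟩ := Finset.mem_image.mp hj
    rw [mem_prefIdx] at hi
    rw [cyc_apply]
    unfold cycFun
    split_ifs with h1 h2
    · exact Finset.mem_insert_self _ _
    · exact Finset.mem_insert_of_mem (mem_prefIdx.mpr (by simp only [Fin.val_mk]; omega))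
    · exact Finset.mem_insert_of_mem (mem_prefIdx.mpr (by omega))
  · calc (insert (⟨s, hs⟩ : Fin m) (prefIdx m (k - 1))).card
        ≤ (prefIdx m (k - 1)).card + 1 := Finset.card_insert_le _ _
      _ = k := by rw [card_prefIdx (by omega)]; omega
      _ = ((prefIdx m k).image (cyc t s hts hs)).card := by
          rw [Finset.card_image_of_injective _ (Equiv.injective _), card_prefIdx (by omega)]

variable (X : Fin m → Finset α)

lemma unionUpTo_trans (π : Equiv.Perm (Fin m)) {t s : ℕ} (hts : t < s) (hs : s < m) (k : ℕ) :
    unionUpTo X ((cyc t s hts hs).trans π) k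
      = (((prefIdx m k).image (cyc t s hts hs)).image π).biUnion X := by
  rw [unionUpTo_eq, Equiv.coe_trans, ← Finset.image_image]

lemma unionUpTo_trans_le (π : Equiv.Perm (Fin m)) {t s k : ℕ} (hts : t < s) (hs : s < m)
    (hk : k ≤ t) : unionUpTo X ((cyc t s hts hs).trans π) k = unionUpTo X π k := by
  rw [unionUpTo_trans, image_cyc_of_le hts hs hk, ← unionUpTo_eq]

lemma unionUpTo_trans_gt (π : Equiv.Perm (Fin m)) {t s k : ℕ} (hts : t < s) (hs : s < m)
    (hk : s < k) : unionUpTo X ((cyc t s hts hs).trans π) k = unionUpTo X π k := by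
  rw [unionUpTo_trans, image_cyc_of_gt hts hs hk, ← unionUpTo_eq]

lemma unionUpTo_trans_mid (π : Equiv.Perm (Fin m)) {t s k : ℕ} (hts : t < s) (hs : s < m)
    (hk1 : t < k) (hk2 : k ≤ s) :
    unionUpTo X ((cyc t s hts hs).trans π) k
      = X (π ⟨s, hs⟩) ∪ unionUpTo X π (k - 1) := by
  rw [unionUpTo_trans, image_cyc_mid hts hs hk1 hk2, Finset.image_insert,
    Finset.biUnion_insert, ← unionUpTo_eq]

variable [Fintype α]

lemma exchange (π : Equiv.Perm (Fin m)) (t s : ℕ)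
    (ht1 : 1 ≤ t) (hts : t < s) (hs : s < m)
    (ha : (X (π ⟨s, hs⟩) \ unionUpTo X π t).card ≤ 1) :
    ∃ π' : Equiv.Perm (Fin m),
      (∀ i : Fin m, (i : ℕ) < t → π' i = π i) ∧
      π' ⟨t, hts.trans hs⟩ = π ⟨s, hs⟩ ∧
      (∀ k, k ≤ t → unionUpTo X π' k = unionUpTo X π k) ∧
      DeltaPerm X π' ≤ DeltaPerm X π := by
  refine ⟨(cyc t s hts hs).trans π, ?_, ?_, ?_, ?_⟩
  · intro i hi
    rw [Equiv.trans_apply, cyc_apply_lt t s hts hs i hi]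
  · rw [Equiv.trans_apply, cyc_apply_t t s hts hs _ rfl]
  · intro k hk
    exact unionUpTo_trans_le X π hts hs hk
  · apply DeltaPerm_le (by omega : 1 ≤ m)
    intro k hk1 hkm
    by_cases h1 : k ≤ t
    · have := unionUpTo_trans_le X π hts hs h1
      unfold delta
      rw [this]
      exact delta_le_DeltaPerm X π hk1 hkm
    by_cases h2 : s < k
    · have := unionUpTo_trans_gt X π hts hs h2
      unfold delta
      rw [this]
      exact delta_le_DeltaPerm X π hk1 hkm
    · push_neg at h1 h2
      have hmid := unionUpTo_trans_mid X π hts hs h1 h2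
      have key : delta X ((cyc t s hts hs).trans π) k ≤ delta X π (k - 1) := by
        unfold delta
        rw [hmid]
        have e1 : (X (π ⟨s, hs⟩) \ unionUpTo X π (k - 1)).card
            + (unionUpTo X π (k - 1)).card
            = (X (π ⟨s, hs⟩) ∪ unionUpTo X π (k - 1)).card :=
          Finset.card_sdiff_add_card _ _
        have e2 : (X (π ⟨s, hs⟩) \ unionUpTo X π (k - 1)).card
            ≤ (X (π ⟨s, hs⟩) \ unionUpTo X π t).card :=
          Finset.card_le_card
            (Finset.sdiff_subset_sdiff (Finset.Subset.refl _) (unionUpTo_mono X π (by omega)))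
        omega
      exact key.trans (delta_le_DeltaPerm X π (by omega) (by omega))

end Img

/-- Every family of sets of size at most `2` has a standard ordering `π` with
`Δ(𝒳,π) = Δ(𝒳)`. -/
theorem exists_standard_ordering_optimal {α : Type*} [Fintype α] [DecidableEq α]
    {m : ℕ} (hm : 1 ≤ m) (X : Fin m → Finset α) (hcard : ∀ i, (X i).card ≤ 2) :
    ∃ π : Equiv.Perm (Fin m), IsStandardOrdering X π ∧
      DeltaPerm X π = DeltaMin X := by
  suffices h : ∀ T : ℕ, ∃ π : Equiv.Perm (Fin m), DeltaPerm X π = DeltaMin X ∧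
      ∀ (t : ℕ) (ht : t < m), 1 ≤ t → t < T →
        ∀ j : Fin m, (∀ i : Fin m, (i : ℕ) < t → π i ≠ j) →
          (X (π ⟨t, ht⟩) \ unionUpTo X π t).card ≤ (X j \ unionUpTo X π t).card by
    obtain ⟨π, h1, h2⟩ := h m
    exact ⟨π, fun t ht h1t j hj => h2 t ht h1t ht j hj, h1⟩
  intro T
  induction T with
  | zero =>
    obtain ⟨π0, hπ0⟩ := exists_optimal hm X
    exact ⟨π0, hπ0, fun t ht h1 h0 => absurd h0 (by omega)⟩
  | succ T ih =>
    obtain ⟨π, hopt, hstd⟩ := ih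
    by_cases hT : 1 ≤ T ∧ T < m
    · obtain ⟨hT1, hTm⟩ := hT
      by_cases hgood : ∀ j : Fin m, (∀ i : Fin m, (i : ℕ) < T → π i ≠ j) →
          (X (π ⟨T, hTm⟩) \ unionUpTo X π T).card ≤ (X j \ unionUpTo X π T).card
      · refine ⟨π, hopt, fun t ht h1 h0 j hj => ?_⟩
        rcases Nat.lt_succ_iff_lt_or_eq.mp h0 with h | h
        · exact hstd t ht h1 h j hj
        · subst h
          exact hgood j hj
      · push_neg at hgood
        obtain ⟨jbad, hjbad, hlt⟩ := hgood
        -- the set of remaining indices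
        set R : Finset (Fin m) :=
          univ.filter (fun j : Fin m => ∀ i : Fin m, (i : ℕ) < T → π i ≠ j) with hR
        have hRmem : ∀ j : Fin m, j ∈ R ↔ ∀ i : Fin m, (i : ℕ) < T → π i ≠ j := by
          intro j; simp [hR]
        have hRne : R.Nonempty := ⟨jbad, (hRmem jbad).mpr hjbad⟩
        obtain ⟨j0, hj0R, hj0min⟩ :=
          R.exists_min_image (fun j => (X j \ unionUpTo X π T).card) hRne
        have hj0rem := (hRmem j0).mp hj0R
        -- j0's new-element count is at most 1
        have ha1 : (X j0 \ unionUpTo X π T).card ≤ 1 := by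
          have h1 := hj0min jbad ((hRmem jbad).mpr hjbad)
          have h2 : (X (π ⟨T, hTm⟩) \ unionUpTo X π T).card ≤ 2 :=
            le_trans (Finset.card_le_card Finset.sdiff_subset) (hcard _)
          omega
        -- position of j0
        set s : Fin m := π.symm j0 with hs
        have hπs : π s = j0 := Equiv.apply_symm_apply π j0
        have hsT : (T : ℕ) < (s : ℕ) := by
          rcases lt_trichotomy ((s : ℕ)) T with h | h | h
          · exact absurd hπs (hj0rem s h)
          · exfalso
            have : π ⟨T, hTm⟩ = j0 := by
              rw [← hπs]; congr 1; exact Fin.ext h.symm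
            rw [this] at hlt
            have := hj0min jbad ((hRmem jbad).mpr hjbad)
            omega
          · exact h
        have hsm : (s : ℕ) < m := s.isLt
        have hπs' : π ⟨(s : ℕ), hsm⟩ = j0 := by
          rw [← hπs]
        obtain ⟨π', hpre, hpost, huni, hdel⟩ :=
          exchange X π T (s : ℕ) hT1 hsT hsm (by rw [hπs']; exact ha1)
        have hopt' : DeltaPerm X π' = DeltaMin X := by
          have h1 : DeltaMin X ≤ DeltaPerm X π' := DeltaMin_le hm X π'
          have h2 : DeltaPerm X π' ≤ DeltaMin X := hopt ▸ hdel
          omega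
        refine ⟨π', hopt', fun t ht h1 h0 j hj => ?_⟩
        have hut : unionUpTo X π' t = unionUpTo X π t := by
          rcases Nat.lt_succ_iff_lt_or_eq.mp h0 with h | h
          · exact huni t (by omega)
          · exact huni t (by omega)
        rcases Nat.lt_succ_iff_lt_or_eq.mp h0 with h | h
        · -- t < T : transfer from π
          have hπt : π' ⟨t, ht⟩ = π ⟨t, ht⟩ := hpre _ h
          rw [hut, hπt]
          exact hstd t ht h1 h j (fun i hi => by rw [← hpre i (by omega)]; exact hj i hi)
        · -- t = T : new position
          subst h
          have hπt : π' ⟨t, ht⟩ = j0 := by rw [hpost]; exact hπs'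
          rw [hut, hπt]
          exact hj0min j ((hRmem j).mpr (fun i hi => by
            rw [← hpre i hi]; exact hj i hi))
    · -- T = 0 or m ≤ T : nothing new to check
      refine ⟨π, hopt, fun t ht h1 h0 j hj => ?_⟩
      have : t < T := by omega
      exact hstd t ht h1 this j hj
end

section
/- For every n ≥ 3, f(n) ≤ f(n+1). -/
open Finset

namespace FMonoAux

/-- Extend a family on `Fin n` to `Fin (n+1)` by adding the singleton `{last}`. -/
def ext {n : ℕ} (X : Fin n → Finset (Fin n)) : Fin (n + 1) → Finset (Fin (n + 1)) :=
  fun i => if h : (i : ℕ) < n then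
    (X ⟨i, h⟩).map ⟨Fin.castSucc, Fin.castSucc_injective n⟩
  else {Fin.last n}

lemma dset_nonempty {m N : ℕ} (hm : 1 ≤ m) (X : Fin m → Finset (Fin N))
    (π : Equiv.Perm (Fin m)) :
    ({d : ℤ | ∃ k : ℕ, 1 ≤ k ∧ k ≤ m ∧ d = delta X π k}).Nonempty :=
  ⟨delta X π 1, 1, le_rfl, hm, rfl⟩

lemma delta_le {m N : ℕ} (X : Fin m → Finset (Fin N)) (π : Equiv.Perm (Fin m)) (k : ℕ) :
    delta X π k ≤ (N : ℤ) := by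
  have h : (unionUpTo X π k).card ≤ N := by
    have := Finset.card_le_card (Finset.subset_univ (unionUpTo X π k))
    simpa using this
  unfold delta
  have : ((unionUpTo X π k).card : ℤ) ≤ (N : ℤ) := by exact_mod_cast h
  omega

lemma dset_bddAbove {m N : ℕ} (X : Fin m → Finset (Fin N)) (π : Equiv.Perm (Fin m)) :
    BddAbove {d : ℤ | ∃ k : ℕ, 1 ≤ k ∧ k ≤ m ∧ d = delta X π k} := by
  refine ⟨(N : ℤ), ?_⟩
  rintro d ⟨k, _, _, rfl⟩
  exact delta_le X π k

lemma DeltaPerm_le {m N : ℕ} (hm : 1 ≤ m) (X : Fin m → Finset (Fin N))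
    (π : Equiv.Perm (Fin m)) : DeltaPerm X π ≤ (N : ℤ) := by
  refine csSup_le (dset_nonempty hm X π) ?_
  rintro d ⟨k, _, _, rfl⟩
  exact delta_le X π k

lemma neg_one_le_DeltaPerm {m N : ℕ} (hm : 1 ≤ m) (X : Fin m → Finset (Fin N))
    (π : Equiv.Perm (Fin m)) : (-1 : ℤ) ≤ DeltaPerm X π := by
  have h1 : delta X π 1 ∈ {d : ℤ | ∃ k : ℕ, 1 ≤ k ∧ k ≤ m ∧ d = delta X π k} :=
    ⟨1, le_rfl, hm, rfl⟩
  have h2 : delta X π 1 ≤ DeltaPerm X π := le_csSup (dset_bddAbove X π) h1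
  have h3 : (-1 : ℤ) ≤ delta X π 1 := by
    unfold delta
    have : (0 : ℤ) ≤ ((unionUpTo X π 1).card : ℤ) := by positivity
    omega
  exact h3.trans h2

lemma mset_nonempty {m N : ℕ} (X : Fin m → Finset (Fin N)) :
    ({d : ℤ | ∃ π : Equiv.Perm (Fin m), d = DeltaPerm X π}).Nonempty :=
  ⟨DeltaPerm X 1, 1, rfl⟩

lemma mset_bddBelow {m N : ℕ} (hm : 1 ≤ m) (X : Fin m → Finset (Fin N)) :
    BddBelow {d : ℤ | ∃ π : Equiv.Perm (Fin m), d = DeltaPerm X π} := by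
  refine ⟨-1, ?_⟩
  rintro d ⟨π, rfl⟩
  exact neg_one_le_DeltaPerm hm X π

lemma DeltaMin_le {m N : ℕ} (hm : 1 ≤ m) (X : Fin m → Finset (Fin N)) :
    DeltaMin X ≤ (N : ℤ) := by
  have h1 : DeltaMin X ≤ DeltaPerm X 1 := csInf_le (mset_bddBelow hm X) ⟨1, rfl⟩
  exact h1.trans (DeltaPerm_le hm X 1)

lemma ext_card_le {n : ℕ} (X : Fin n → Finset (Fin n)) (hc : ∀ i, (X i).card ≤ 3)
    (i : Fin (n + 1)) : ((ext X) i).card ≤ 3 := by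
  unfold ext
  split
  · rename_i h
    rw [Finset.card_map]
    exact hc _
  · simp

/-- The key combinatorial step: for any ordering `π'` of the extended family,
there is an ordering `π` of the original family all of whose deltas appear
among the deltas of `π'`. -/
lemma key {n : ℕ} (X : Fin n → Finset (Fin n)) (π' : Equiv.Perm (Fin (n + 1))) :
    ∃ π : Equiv.Perm (Fin n), ∀ k : ℕ, 1 ≤ k → k ≤ n →
      ∃ k' : ℕ, 1 ≤ k' ∧ k' ≤ n + 1 ∧ delta (ext X) π' k' = delta X π k := by
  classical
  set p : Fin (n + 1) := π'.symm (Fin.last n) with hp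
  have hπ'p : π' p = Fin.last n := Equiv.apply_symm_apply π' _
  have hne : ∀ j : Fin n, π' (p.succAbove j) ≠ Fin.last n := by
    intro j h
    have : p.succAbove j = p := π'.injective (by rw [h, hπ'p])
    exact Fin.succAbove_ne p j this
  set f : Fin n → Fin n := fun j => (π' (p.succAbove j)).castPred (hne j) with hf
  have hinj : Function.Injective f := by
    intro a b hab
    have := Fin.castPred_inj.mp hab
    exact Fin.succAbove_right_injective (π'.injective this)
  have hbij : Function.Bijective f := Finite.injective_iff_bijective.mp hinj
  refine ⟨Equiv.ofBijective f hbij, ?_⟩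
  intro k hk1 hkn
  set π : Equiv.Perm (Fin n) := Equiv.ofBijective f hbij with hπ
  have hπapp : ∀ j, π j = f j := fun j => rfl
  set k' : ℕ := if k ≤ (p : ℕ) then k else k + 1 with hk'
  have hvals : ∀ j : Fin n, ((p.succAbove j : Fin (n + 1)) : ℕ) < k' ↔ (j : ℕ) < k := by
    intro j
    by_cases hjp : (j : ℕ) < (p : ℕ)
    · have : p.succAbove j = j.castSucc := by
        apply Fin.succAbove_of_castSucc_lt
        exact Fin.lt_def.mpr (by simpa using hjp)
      rw [this]
      simp only [Fin.coe_castSucc, hk']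
      split <;> omega
    · have : p.succAbove j = j.succ := by
        apply Fin.succAbove_of_le_castSucc
        exact Fin.le_def.mpr (by simpa using Nat.le_of_not_lt hjp)
      rw [this]
      simp only [Fin.val_succ, hk']
      split <;> omega
  have hpk' : ((p : ℕ) < k') ↔ ¬ (k ≤ (p : ℕ)) := by
    rw [hk']; split <;> omega
  -- the extended set at positions succAbove
  have hextj : ∀ j : Fin n, (ext X) (π' (p.succAbove j)) =
      (X (π j)).map ⟨Fin.castSucc, Fin.castSucc_injective n⟩ := by
    intro j
    have hlt : ((π' (p.succAbove j)) : ℕ) < n := Fin.val_lt_last (hne j)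
    unfold ext
    rw [dif_pos hlt]
    have heq : (⟨((π' (p.succAbove j)) : ℕ), hlt⟩ : Fin n) = π j := by
      rw [hπapp, hf]
      apply Fin.ext
      simp [Fin.coe_castPred]
    rw [heq]
  -- union identity
  have hunion : unionUpTo (ext X) π' k' =
      (unionUpTo X π k).map ⟨Fin.castSucc, Fin.castSucc_injective n⟩ ∪
        (if (p : ℕ) < k' then {Fin.last n} else ∅) := by
    ext x
    constructor
    · intro hx
      rw [unionUpTo, Finset.mem_biUnion] at hx
      obtain ⟨i, hi, hx⟩ := hx
      have hik : (i : ℕ) < k' := (Finset.mem_filter.mp hi).2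
      refine Finset.mem_union.mpr ?_
      by_cases hip : i = p
      · subst hip
        rw [hπ'p] at hx
        have hxl : x = Fin.last n := by
          unfold ext at hx
          rw [dif_neg (by simp)] at hx
          simpa using hx
        right
        rw [if_pos hik, hxl]
        exact Finset.mem_singleton_self _
      · obtain ⟨j, hj⟩ := Fin.exists_succAbove_eq hip
        left
        rw [← hj] at hx hik
        rw [hextj j] at hx
        obtain ⟨y, hy, hyx⟩ := Finset.mem_map.mp hx
        refine Finset.mem_map.mpr ⟨y, ?_, hyx⟩
        rw [unionUpTo, Finset.mem_biUnion]
        exact ⟨j, Finset.mem_filter.mpr ⟨Finset.mem_univ _, (hvals j).mp hik⟩, hy⟩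
    · intro hx
      rcases Finset.mem_union.mp hx with hx | hx
      · obtain ⟨y, hy, hyx⟩ := Finset.mem_map.mp hx
        rw [unionUpTo, Finset.mem_biUnion] at hy
        obtain ⟨j, hj, hyj⟩ := hy
        have hjk : (j : ℕ) < k := (Finset.mem_filter.mp hj).2
        rw [unionUpTo, Finset.mem_biUnion]
        refine ⟨p.succAbove j, Finset.mem_filter.mpr ⟨Finset.mem_univ _,
          (hvals j).mpr hjk⟩, ?_⟩
        rw [hextj j]
        exact Finset.mem_map.mpr ⟨y, hyj, hyx⟩
      · by_cases hpk : (p : ℕ) < k'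
        · rw [if_pos hpk] at hx
          rw [unionUpTo, Finset.mem_biUnion]
          refine ⟨p, Finset.mem_filter.mpr ⟨Finset.mem_univ _, hpk⟩, ?_⟩
          rw [hπ'p]
          unfold ext
          rw [dif_neg (by simp)]
          simpa using hx
        · rw [if_neg hpk] at hx
          simp at hx
  -- cards
  have hlast_not : Fin.last n ∉
      (unionUpTo X π k).map (⟨Fin.castSucc, Fin.castSucc_injective n⟩ :
        Fin n ↪ Fin (n+1)) := by
    intro h
    obtain ⟨y, _, hy⟩ := Finset.mem_map.mp h
    have hyv : (y : ℕ) = n := by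
      have := congrArg Fin.val hy
      simpa using this
    have := y.isLt
    omega
  by_cases hkp : k ≤ (p : ℕ)
  · have hk'eq : k' = k := by rw [hk', if_pos hkp]
    refine ⟨k', by omega, by omega, ?_⟩
    have : unionUpTo (ext X) π' k' =
        (unionUpTo X π k).map ⟨Fin.castSucc, Fin.castSucc_injective n⟩ := by
      rw [hunion, if_neg (by rw [hpk']; exact fun h => h hkp), Finset.union_empty]
    unfold delta
    rw [this, Finset.card_map, hk'eq]
  · have hk'eq : k' = k + 1 := by rw [hk', if_neg hkp]
    refine ⟨k', by omega, by omega, ?_⟩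
    have hp' : (p : ℕ) < k' := hpk'.mpr hkp
    have hU : unionUpTo (ext X) π' k' =
        (unionUpTo X π k).map ⟨Fin.castSucc, Fin.castSucc_injective n⟩ ∪ {Fin.last n} := by
      rw [hunion, if_pos hp']
    have hcard : (unionUpTo (ext X) π' k').card = (unionUpTo X π k).card + 1 := by
      rw [hU, Finset.card_union_of_disjoint (by simpa using hlast_not),
        Finset.card_map, Finset.card_singleton]
    unfold delta
    rw [hcard, hk'eq]
    push_cast
    ring

lemma DeltaMin_le_ext {n : ℕ} (hn : 1 ≤ n) (X : Fin n → Finset (Fin n)) :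
    DeltaMin X ≤ DeltaMin (ext X) := by
  refine le_csInf (mset_nonempty _) ?_
  rintro d ⟨π', rfl⟩
  obtain ⟨π, hπ⟩ := key X π'
  have h1 : DeltaMin X ≤ DeltaPerm X π := csInf_le (mset_bddBelow hn X) ⟨π, rfl⟩
  refine h1.trans ?_
  refine csSup_le_csSup (dset_bddAbove (ext X) π') (dset_nonempty hn X π) ?_
  rintro d ⟨k, hk1, hkn, rfl⟩
  obtain ⟨k', hk'1, hk'n, hk'eq⟩ := hπ k hk1 hkn
  exact ⟨k', hk'1, hk'n, hk'eq.symm⟩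

end FMonoAux

/-- For every `n ≥ 3`, `f(n) ≤ f(n+1)`. -/
theorem f_monotone (n : ℕ) (hn : 3 ≤ n) :
    fFam n n 3 ≤ fFam (n + 1) (n + 1) 3 := by
  have hn1 : 1 ≤ n := by omega
  unfold fFam
  have hBdd : BddAbove {d : ℤ | ∃ X : Fin (n+1) → Finset (Fin (n+1)),
      (∀ i, (X i).card ≤ 3) ∧ d = DeltaMin X} := by
    refine ⟨((n : ℤ) + 1), ?_⟩
    rintro d ⟨X, _, rfl⟩
    have := FMonoAux.DeltaMin_le (m := n + 1) (N := n + 1) (by omega) X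
    push_cast at this ⊢
    exact this
  have hNe : ({d : ℤ | ∃ X : Fin n → Finset (Fin n),
      (∀ i, (X i).card ≤ 3) ∧ d = DeltaMin X}).Nonempty := by
    refine ⟨DeltaMin (fun _ : Fin n => (∅ : Finset (Fin n))), fun _ => ∅, fun i => by simp, rfl⟩
  refine csSup_le hNe ?_
  rintro d ⟨X, hX, rfl⟩
  have h1 : DeltaMin X ≤ DeltaMin (FMonoAux.ext X) := FMonoAux.DeltaMin_le_ext hn1 X
  refine h1.trans (le_csSup hBdd ?_)
  exact ⟨FMonoAux.ext X, FMonoAux.ext_card_le X hX, rfl⟩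
end

section
/- Let 𝒳 ∈ S(n,m,3) be disconnected with m ≥ n, and let c denote the order of the largest component of 𝒳. Then Δ(𝒳) ≤ ⌊(c+1)/2⌋. -/
open Finset

/-- The graph `G_𝒳`: distinct `x,y` are adjacent iff `{x,y} ⊆ X_i` for some `i`. -/
def famGraph {α : Type*} {m : ℕ} (X : Fin m → Finset α) : SimpleGraph α where
  Adj x y := x ≠ y ∧ ∃ i, x ∈ X i ∧ y ∈ X i
  symm := by
    constructor
    rintro x y ⟨hxy, i, hx, hy⟩
    exact ⟨hxy.symm, i, hy, hx⟩
  loopless := by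
    constructor
    rintro x ⟨hx, -⟩
    exact hx rfl

/-- The vertex set of `G_𝒳`, i.e. `X₁ ∪ ⋯ ∪ X_m`. -/
def groundSet {α : Type*} [DecidableEq α] {m : ℕ} (X : Fin m → Finset α) : Finset α :=
  Finset.univ.biUnion X

/-- `𝒳` is connected: the vertex set is nonempty and every two of its
vertices are joined by a path of `G_𝒳`. -/
def FamConnected {α : Type*} [DecidableEq α] {m : ℕ} (X : Fin m → Finset α) : Prop :=
  (groundSet X).Nonempty ∧
    ∀ x ∈ groundSet X, ∀ y ∈ groundSet X, (famGraph X).Reachable x y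

/-!
Order the sets component by component. Inside a component `C`, list its sets so that each
one meets the union of the earlier ones, which connectivity allows; since the sets have at
most three points, the first `t` of them cover at most `min (2t+1) |C| ≤ t + ⌊(|C|+1)/2⌋`
points. The empty sets form one more block. The excesses `|⋃ b| - |b|` of the blocks `b`
add up to `|X₁ ∪ ⋯ ∪ X_m| - m ≤ n - m ≤ 0`, as distinct components are disjoint. Concatenate
the blocks in increasing order of excess: every initial run of whole blocks then has
non-positive total excess, so the first `k` sets cover at most `k + ⌊(c+1)/2⌋` points.
-/

namespace DeltaBound

lemma sum_take_le_of_pairwise_le {M : Type*} [AddCommGroup M] [LinearOrder M]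
    [IsOrderedAddMonoid M] {l : List M} (hl : l.Pairwise (· ≤ ·)) {s : M} (hsum : l.sum ≤ s)
    (hs : 0 ≤ s) (j : ℕ) : (l.take j).sum ≤ s := by
  induction l generalizing s j with
  | nil => simpa using hs
  | cons a l ih =>
    obtain ⟨hal, hl⟩ := List.pairwise_cons.1 hl
    rw [List.sum_cons] at hsum
    have has : a ≤ s := by
      by_contra! h
      have : 0 ≤ l.sum := List.sum_nonneg fun x hx => hs.trans (h.le.trans (hal x hx))
      have := add_lt_add_of_lt_of_le h this
      rw [add_zero] at this
      exact (hsum.trans_lt this).false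
    rcases j with _ | j
    · simpa using hs
    · have := ih hl (s := s - a) (by rw [le_sub_iff_add_le']; exact hsum) (sub_nonneg.2 has) j
      rw [List.take_succ_cons, List.sum_cons]
      rwa [le_sub_iff_add_le'] at this

section Fibers

variable {ι β : Type*} [DecidableEq β] [Fintype ι] (f : ι → β) (L : β → List ι)

noncomputable def fiberBlocks : List (List ι) := (Finset.univ.image f).toList.map L

variable {f L}

lemma mem_flatten_fiberBlocks (hL : ∀ b i, i ∈ L b ↔ f i = b) (i : ι) :
    i ∈ (fiberBlocks f L).flatten :=
  List.mem_flatten.2 ⟨L (f i), List.mem_map.2 ⟨f i, by simp, rfl⟩, (hL _ _).2 rfl⟩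

lemma nodup_flatten_fiberBlocks (hL : ∀ b i, i ∈ L b ↔ f i = b) (hnd : ∀ b, (L b).Nodup) :
    (fiberBlocks f L).flatten.Nodup := by
  refine List.nodup_flatten.2 ⟨by simp [fiberBlocks, hnd], List.pairwise_map.2 ?_⟩
  refine (Finset.nodup_toList _).imp fun hne => List.disjoint_left.2 fun _ hi hi' => hne ?_
  exact ((hL _ _).1 hi).symm.trans ((hL _ _).1 hi')

end Fibers

section ListUnion

variable {ι α : Type*} [DecidableEq ι] [DecidableEq α] (X : ι → Finset α)

def listUnion (l : List ι) : Finset α := l.toFinset.biUnion X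

def excess (b : List ι) : ℤ := #(listUnion X b) - b.length

@[simp] lemma listUnion_nil : listUnion X [] = ∅ := rfl

@[simp] lemma listUnion_singleton (i : ι) : listUnion X [i] = X i := by
  simp [listUnion]

@[simp] lemma listUnion_append (l₁ l₂ : List ι) :
    listUnion X (l₁ ++ l₂) = listUnion X l₁ ∪ listUnion X l₂ := by
  simp [listUnion, List.toFinset_append, Finset.union_biUnion]

lemma mem_listUnion {l : List ι} {x : α} : x ∈ listUnion X l ↔ ∃ i ∈ l, x ∈ X i := by
  simp [listUnion]

lemma listUnion_take_subset (l : List ι) (t : ℕ) : listUnion X (l.take t) ⊆ listUnion X l :=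
  Finset.biUnion_subset_biUnion_of_subset_left X fun _ hi =>
    List.mem_toFinset.2 (List.take_subset t l (List.mem_toFinset.1 hi))

variable {X}

lemma card_listUnion_concat_le {l : List ι} {i : ι} {d : ℕ} (hi : #(X i) ≤ d + 1)
    (hmeet : ¬Disjoint (listUnion X l) (X i)) :
    #(listUnion X (l ++ [i])) ≤ #(listUnion X l) + d := by
  have hinter : 0 < #(listUnion X l ∩ X i) :=
    Finset.card_pos.2 (Finset.not_disjoint_iff_nonempty_inter.1 hmeet)
  have := Finset.card_union_add_card_inter (listUnion X l) (X i)
  rw [listUnion_append, listUnion_singleton]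
  omega

lemma card_listUnion_take_concat_le {l : List ι} {i : ι} {d : ℕ}
    (hl : ∀ t, #(listUnion X (l.take t)) ≤ d * t + 1) (hi : #(X i) ≤ d + 1)
    (hmeet : ¬Disjoint (listUnion X l) (X i)) (t : ℕ) :
    #(listUnion X ((l ++ [i]).take t)) ≤ d * t + 1 := by
  rcases le_or_gt t l.length with ht | ht
  · simpa [List.take_append, Nat.sub_eq_zero_of_le ht] using hl t
  · rw [List.take_of_length_le (by simpa using ht)]
    have := hl l.length
    rw [List.take_length] at this
    have := card_listUnion_concat_le hi hmeet
    have : d * l.length + d ≤ d * t := by nlinarith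
    omega

section LinkedOrder

variable {S : Finset ι} {d : ℕ} (hX : ∀ i ∈ S, #(X i) ≤ d + 1)
  (hconn : ∀ T ⊆ S, T.Nonempty → T ≠ S → ∃ i ∈ S \ T, ¬Disjoint (T.biUnion X) (X i))
include hX hconn

lemma exists_linked_order_extending {l : List ι} (hnd : l.Nodup) (hsub : l.toFinset ⊆ S)
    (hne : l ≠ []) (hl : ∀ t, #(listUnion X (l.take t)) ≤ d * t + 1) :
    ∃ L : List ι, L.Nodup ∧ L.toFinset = S ∧ ∀ t, #(listUnion X (L.take t)) ≤ d * t + 1 := by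
  obtain ⟨r, hr⟩ : ∃ r, #(S \ l.toFinset) = r := ⟨_, rfl⟩
  induction r generalizing l with
  | zero =>
    exact ⟨l, hnd, Finset.Subset.antisymm hsub (Finset.sdiff_eq_empty_iff_subset.1
      (Finset.card_eq_zero.1 hr)), hl⟩
  | succ r ih =>
    have hproper : l.toFinset ≠ S := by
      rintro rfl
      simp at hr
    obtain ⟨i, hi, hmeet⟩ := hconn _ hsub ((List.toFinset_nonempty_iff l).2 hne) hproper
    obtain ⟨hiS, hil⟩ := Finset.mem_sdiff.1 hi
    refine ih (List.nodup_append.2 ⟨hnd, List.nodup_singleton i, ?_⟩) ?_ (by simp)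
      (card_listUnion_take_concat_le hl (hX i hiS) hmeet) ?_
    · rintro a ha _ hb rfl
      exact hil (List.mem_toFinset.2 (by simpa [List.mem_singleton.1 hb] using ha))
    · simpa [List.toFinset_append] using Finset.insert_subset hiS hsub
    · have : S \ (l ++ [i]).toFinset = (S \ l.toFinset).erase i := by
        ext
        simp [List.toFinset_append]
        tauto
      rw [this, Finset.card_erase_of_mem hi, hr]
      rfl

theorem exists_linked_order :
    ∃ L : List ι, L.Nodup ∧ L.toFinset = S ∧ ∀ t, #(listUnion X (L.take t)) ≤ d * t + 1 := by
  obtain rfl | ⟨i, hi⟩ := S.eq_empty_or_nonempty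
  · exact ⟨[], List.nodup_nil, rfl, fun _ => by simp⟩
  refine exists_linked_order_extending hX hconn (List.nodup_singleton i) (by simpa using hi)
    (List.cons_ne_nil i []) fun t => ?_
  rcases t with _ | t
  · simp
  · have := hX i hi
    simp only [List.take_succ_cons, List.take_nil, listUnion_singleton]
    nlinarith

end LinkedOrder

theorem card_listUnion_take_flatten_le {bs : List (List ι)} {B : ℕ}
    (hb : ∀ b ∈ bs, ∀ t, #(listUnion X (b.take t)) ≤ t + B) {s : ℤ}
    (hs : ∀ j, ((bs.map (excess X)).take j).sum ≤ s) (k : ℕ) :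
    (#(listUnion X (bs.flatten.take k)) : ℤ) ≤ k + s + B := by
  induction bs generalizing s k with
  | nil =>
    have := hs 0
    simp only [List.map_nil, List.take_nil, List.sum_nil] at this
    simp only [List.flatten_nil, List.take_nil, listUnion_nil, Finset.card_empty]
    positivity
  | cons b bs ih =>
    have hs0 : 0 ≤ s := by simpa using hs 0
    have hbs : excess X b ≤ s := by simpa using hs 1
    rw [List.flatten_cons, List.take_append]
    rcases le_or_gt k b.length with hk | hk
    · rw [Nat.sub_eq_zero_of_le hk, List.take_zero, List.append_nil]
      have := hb b List.mem_cons_self k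
      omega
    · have hrest := ih (fun c hc => hb c (List.mem_cons_of_mem b hc)) (s := s - excess X b)
        (fun j => by
          have := hs (j + 1)
          simp only [List.map_cons, List.take_succ_cons, List.sum_cons] at this
          linarith) (k - b.length)
      have hunion := Finset.card_union_le (listUnion X (b.take k))
        (listUnion X (bs.flatten.take (k - b.length)))
      rw [List.take_of_length_le hk.le] at hunion ⊢
      rw [listUnion_append]
      simp only [excess] at hrest
      push_cast [hk.le] at hrest ⊢
      omega

theorem exists_perm_flatten_card_listUnion_take_le {bs : List (List ι)} {B : ℕ}
    (hb : ∀ b ∈ bs, ∀ t, #(listUnion X (b.take t)) ≤ t + B)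
    (hsum : (bs.map (excess X)).sum ≤ 0) :
    ∃ l : List ι, l.Perm bs.flatten ∧ ∀ k, #(listUnion X (l.take k)) ≤ k + B := by
  let sorted := bs.mergeSort fun b b' => excess X b ≤ excess X b'
  have hperm : sorted.Perm bs := List.mergeSort_perm _ _
  have hsorted : (sorted.map (excess X)).Pairwise (· ≤ ·) :=
    List.pairwise_map.2 <| (List.pairwise_mergeSort (fun _ _ _ h h' => by
      simp only [decide_eq_true_eq] at *; exact h.trans h') (fun a b => by
      simpa using le_total (excess X a) (excess X b)) bs).imp (by simp)
  refine ⟨sorted.flatten, hperm.flatten, fun k => ?_⟩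
  have := card_listUnion_take_flatten_le (fun b hb' => hb b (hperm.mem_iff.1 hb')) (s := 0)
    (sum_take_le_of_pairwise_le hsorted (((hperm.map _).sum_eq).trans_le hsum) le_rfl) k
  omega

lemma disjoint_listUnion_flatten {A : Finset α} {bs : List (List ι)}
    (h : ∀ b ∈ bs, Disjoint A (listUnion X b)) : Disjoint A (listUnion X bs.flatten) := by
  simp only [Finset.disjoint_left, mem_listUnion, List.mem_flatten] at h ⊢
  rintro x hx ⟨i, ⟨b, hb, hib⟩, hxi⟩
  exact h b hb hx ⟨i, hib, hxi⟩

lemma sum_map_excess_eq_excess_flatten {bs : List (List ι)}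
    (hdisj : bs.Pairwise fun b b' => Disjoint (listUnion X b) (listUnion X b')) :
    (bs.map (excess X)).sum = excess X bs.flatten := by
  induction bs with
  | nil => simp [excess]
  | cons b bs ih =>
    obtain ⟨hb, hbs⟩ := List.pairwise_cons.1 hdisj
    rw [List.map_cons, List.sum_cons, ih hbs, List.flatten_cons]
    simp only [excess, listUnion_append, List.length_append,
      Finset.card_union_of_disjoint (disjoint_listUnion_flatten hb)]
    push_cast
    ring

lemma pairwise_disjoint_listUnion_fiberBlocks {β : Type*} [DecidableEq β] [Fintype ι]
    {f : ι → β} {L : β → List ι} (hL : ∀ b i, i ∈ L b ↔ f i = b)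
    (hf : ∀ i j x, x ∈ X i → x ∈ X j → f i = f j) :
    (fiberBlocks f L).Pairwise fun b b' => Disjoint (listUnion X b) (listUnion X b') := by
  refine List.pairwise_map.2 <| (Finset.nodup_toList _).imp fun hne => ?_
  refine Finset.disjoint_left.2 fun x hx hx' => hne ?_
  obtain ⟨i, hi, hxi⟩ := (mem_listUnion X).1 hx
  obtain ⟨j, hj, hxj⟩ := (mem_listUnion X).1 hx'
  rw [← (hL _ _).1 hi, ← (hL _ _).1 hj]
  exact hf i j x hxi hxj

end ListUnion

section Components

open SimpleGraph

variable {α : Type*} {m : ℕ} {X : Fin m → Finset α}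

lemma famGraph_reachable_of_mem {i : Fin m} {x y : α} (hx : x ∈ X i) (hy : y ∈ X i) :
    (famGraph X).Reachable x y := by
  by_cases hxy : x = y
  · exact hxy ▸ Reachable.refl x
  · exact Adj.reachable ⟨hxy, i, hx, hy⟩

variable (X) in
/-- The component of `G_𝒳` containing `X i`, or `none` when `X i = ∅`. -/
noncomputable def label (i : Fin m) : Option (famGraph X).ConnectedComponent :=
  if h : (X i).Nonempty then some ((famGraph X).connectedComponentMk h.choose) else none

lemma label_eq_some_of_mem {i : Fin m} {x : α} (hx : x ∈ X i) :
    label X i = some ((famGraph X).connectedComponentMk x) := by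
  rw [label, dif_pos ⟨x, hx⟩]
  exact congrArg some
    (ConnectedComponent.sound (famGraph_reachable_of_mem (Exists.choose_spec _) hx))

lemma nonempty_of_label_eq_some {i : Fin m} {κ : (famGraph X).ConnectedComponent}
    (h : label X i = some κ) : (X i).Nonempty := by
  by_contra hne
  simp [label, hne] at h

variable [DecidableEq α]

section Component

variable {κ : (famGraph X).ConnectedComponent} {S : Finset (Fin m)}
  (hS : ∀ i, i ∈ S ↔ label X i = some κ)
include hS

lemma exists_not_disjoint_of_forall_mem_iff_label_eq (T : Finset (Fin m)) (hTS : T ⊆ S)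
    (hT : T.Nonempty) (hne : T ≠ S) : ∃ i ∈ S \ T, ¬Disjoint (T.biUnion X) (X i) := by
  obtain ⟨i₀, hi₀⟩ := hT
  obtain ⟨j, hjS, hjT⟩ := Finset.exists_of_ssubset (hTS.ssubset_of_ne hne)
  obtain ⟨x, hx⟩ := nonempty_of_label_eq_some ((hS i₀).1 (hTS hi₀))
  obtain ⟨y, hy⟩ := nonempty_of_label_eq_some ((hS j).1 hjS)
  by_cases hyT : y ∈ T.biUnion X
  · exact ⟨j, Finset.mem_sdiff.2 ⟨hjS, hjT⟩, Finset.not_disjoint_iff.2 ⟨y, hyT, hy⟩⟩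
  have hx' := (hS i₀).1 (hTS hi₀)
  have hy' := (hS j).1 hjS
  rw [label_eq_some_of_mem hx] at hx'
  rw [label_eq_some_of_mem hy] at hy'
  obtain ⟨w⟩ := ConnectedComponent.exact (Option.some_injective _ (hx'.trans hy'.symm))
  obtain ⟨d, -, hd, hd'⟩ :=
    w.exists_boundary_dart (T.biUnion X : Set α) (Finset.mem_biUnion.2 ⟨i₀, hi₀, hx⟩) hyT
  obtain ⟨-, i, hi, hi'⟩ := d.adj
  obtain ⟨k, hk, hdk⟩ := Finset.mem_biUnion.1 hd
  have hiκ : label X i = some κ :=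
    (label_eq_some_of_mem hi).trans ((label_eq_some_of_mem hdk).symm.trans ((hS k).1 (hTS hk)))
  exact ⟨i, Finset.mem_sdiff.2 ⟨(hS i).2 hiκ, fun hiT => hd' (Finset.mem_biUnion.2 ⟨i, hiT, hi'⟩)⟩,
    Finset.not_disjoint_iff.2 ⟨_, hd, hi⟩⟩

lemma card_biUnion_le_of_forall_mem_iff_label_eq [Finite α] {c : ℕ}
    (hc : ∀ x ∈ groundSet X, {y | (famGraph X).Reachable x y}.ncard ≤ c) :
    #(S.biUnion X) ≤ c := by
  obtain rfl | ⟨i, hi⟩ := S.eq_empty_or_nonempty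
  · simp
  obtain ⟨x, hx⟩ := nonempty_of_label_eq_some ((hS i).1 hi)
  have hsub : (S.biUnion X : Set α) ⊆ {y | (famGraph X).Reachable x y} := by
    intro y hy
    obtain ⟨j, hj, hyj⟩ := Finset.mem_biUnion.1 hy
    refine ConnectedComponent.exact (Option.some_injective _ ?_)
    rw [← label_eq_some_of_mem hx, (hS i).1 hi, ← (hS j).1 hj, label_eq_some_of_mem hyj]
  calc #(S.biUnion X) = (S.biUnion X : Set α).ncard := (Set.ncard_coe_finset _).symm
    _ ≤ {y | (famGraph X).Reachable x y}.ncard := Set.ncard_le_ncard hsub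
    _ ≤ c := hc x (Finset.mem_biUnion.2 ⟨i, Finset.mem_univ i, hx⟩)

end Component

theorem exists_label_order [Finite α] (hcard : ∀ i, #(X i) ≤ 3) {c : ℕ}
    (hc : ∀ x ∈ groundSet X, {y | (famGraph X).Reachable x y}.ncard ≤ c)
    (o : Option (famGraph X).ConnectedComponent) :
    ∃ L : List (Fin m), L.Nodup ∧ (∀ i, i ∈ L ↔ label X i = o) ∧
      ∀ t, #(listUnion X (L.take t)) ≤ t + (c + 1) / 2 := by
  classical
  cases o with
  | none =>
    refine ⟨(Finset.univ.filter (label X · = none)).toList, Finset.nodup_toList _,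
      by simp, fun t => ?_⟩
    have : listUnion X ((Finset.univ.filter (label X · = none)).toList.take t) = ∅ := by
      refine Finset.eq_empty_of_forall_notMem fun x hx => ?_
      obtain ⟨i, hi, hxi⟩ := (mem_listUnion X).1 hx
      have := List.mem_of_mem_take hi
      simp [label_eq_some_of_mem hxi] at this
    simp [this]
  | some κ =>
    have hS : ∀ i, i ∈ Finset.univ.filter (label X · = some κ) ↔ label X i = some κ := by simp
    obtain ⟨L, hnd, hL, hgrow⟩ := exists_linked_order (d := 2) (fun i _ => hcard i)
      (exists_not_disjoint_of_forall_mem_iff_label_eq hS)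
    refine ⟨L, hnd, fun i => by rw [← List.mem_toFinset, hL, hS], fun t => ?_⟩
    have hc' : #(listUnion X (L.take t)) ≤ c :=
      (Finset.card_le_card (listUnion_take_subset X L t)).trans
        (by rw [listUnion, hL]; exact card_biUnion_le_of_forall_mem_iff_label_eq hS hc)
    have := hgrow t
    omega

open scoped Classical in
lemma sum_map_excess_fiberBlocks_label_nonpos [Fintype α] (hm : Fintype.card α ≤ m)
    {L : Option (famGraph X).ConnectedComponent → List (Fin m)}
    (hL : ∀ o i, i ∈ L o ↔ label X i = o) (hnd : ∀ o, (L o).Nodup) :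
    ((fiberBlocks (label X) L).map (excess X)).sum ≤ 0 := by
  rw [sum_map_excess_eq_excess_flatten (pairwise_disjoint_listUnion_fiberBlocks hL
    fun i j x hi hj => (label_eq_some_of_mem hi).trans (label_eq_some_of_mem hj).symm)]
  have hlen := List.toFinset_card_of_nodup (nodup_flatten_fiberBlocks hL hnd)
  rw [Finset.eq_univ_of_forall fun i => List.mem_toFinset.2 (mem_flatten_fiberBlocks hL i),
    Finset.card_univ, Fintype.card_fin] at hlen
  have := Finset.card_le_univ (listUnion X (fiberBlocks (label X) L).flatten)
  simp only [excess]
  omega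

end Components

section Delta

variable {α : Type*} [DecidableEq α] {m : ℕ}

lemma DeltaMin_le_DeltaPerm (X : Fin m → Finset α) (π : Equiv.Perm (Fin m)) :
    DeltaMin X ≤ DeltaPerm X π := by
  refine csInf_le (Set.Finite.bddBelow ((Set.finite_range (DeltaPerm X)).subset ?_)) ⟨π, rfl⟩
  rintro _ ⟨σ, rfl⟩
  exact ⟨σ, rfl⟩

lemma DeltaPerm_le {X : Fin m → Finset α} {π : Equiv.Perm (Fin m)} {b : ℤ} (hb : 0 ≤ b)
    (h : ∀ k, 1 ≤ k → k ≤ m → delta X π k ≤ b) : DeltaPerm X π ≤ b := by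
  rcases Set.eq_empty_or_nonempty {d : ℤ | ∃ k : ℕ, 1 ≤ k ∧ k ≤ m ∧ d = delta X π k}
    with hempty | hne
  · rw [DeltaPerm, hempty, Int.csSup_empty]
    exact hb
  · exact csSup_le hne fun _ ⟨k, hk, hkm, hd⟩ => hd ▸ h k hk hkm

lemma unionUpTo_eq_listUnion (X : Fin m → Finset α) (l : List (Fin m)) (hlen : l.length = m)
    (π : Equiv.Perm (Fin m)) (hπ : ∀ i, π i = l[i.val]) (k : ℕ) :
    unionUpTo X π k = listUnion X (l.take k) := by
  ext x
  simp only [unionUpTo, Finset.mem_biUnion, Finset.mem_filter, Finset.mem_univ, true_and,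
    mem_listUnion, List.mem_take_iff_getElem, hπ]
  constructor
  · rintro ⟨i, hik, hx⟩
    exact ⟨_, ⟨i, by omega, rfl⟩, hx⟩
  · rintro ⟨_, ⟨j, hj, rfl⟩, hx⟩
    exact ⟨⟨j, by omega⟩, by simp only; omega, hx⟩

theorem DeltaMin_le_of_forall_card_listUnion_take_le (X : Fin m → Finset α)
    (l : List (Fin m)) (hnd : l.Nodup) (hall : ∀ i, i ∈ l) (B : ℕ)
    (hl : ∀ k, #(listUnion X (l.take k)) ≤ k + B) : DeltaMin X ≤ B := by
  have hlen : l.length = m := by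
    simpa using Fintype.card_congr (hnd.getEquivOfForallMemList l hall)
  let π : Equiv.Perm (Fin m) := (finCongr hlen.symm).trans (hnd.getEquivOfForallMemList l hall)
  have hunion := unionUpTo_eq_listUnion X l hlen π fun i => by
    simp [π, List.Nodup.getEquivOfForallMemList_apply]
  refine (DeltaMin_le_DeltaPerm X π).trans (DeltaPerm_le (by positivity) fun k _ _ => ?_)
  have := hl k
  rw [delta, hunion]
  omega

end Delta

end DeltaBound

open DeltaBound

theorem DeltaMin_le_of_disconnected_general (n m c : ℕ) (hm : n ≤ m)
    (X : Fin m → Finset (Fin n)) (hcard : ∀ i, (X i).card ≤ 3)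
    (hc : c = (groundSet X).sup
        (fun x => {y | (famGraph X).Reachable x y}.ncard)) :
    DeltaMin X ≤ ((c + 1) / 2 : ℕ) := by
  classical
  have hcomp (x) (hx : x ∈ groundSet X) : {y | (famGraph X).Reachable x y}.ncard ≤ c :=
    hc ▸ Finset.le_sup (f := fun x => {y | (famGraph X).Reachable x y}.ncard) hx
  choose L hnd hL hbound using exists_label_order hcard hcomp
  obtain ⟨l, hperm, hl⟩ := exists_perm_flatten_card_listUnion_take_le
    (fun b hb => by obtain ⟨o, -, rfl⟩ := List.mem_map.1 hb; exact hbound o)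
    (sum_map_excess_fiberBlocks_label_nonpos (by simpa using hm) hL hnd)
  exact DeltaMin_le_of_forall_card_listUnion_take_le X l
    (hperm.nodup_iff.2 (nodup_flatten_fiberBlocks hL hnd))
    (fun i => hperm.mem_iff.2 (mem_flatten_fiberBlocks hL i)) _ hl

/-- If `𝒳 ∈ S(n,m,3)` is disconnected and `m ≥ n`, then
`Δ(𝒳) ≤ ⌊(c+1)/2⌋` where `c` is the order of the largest component of `𝒳`. -/
theorem DeltaMin_le_of_disconnected (n m c : ℕ) (hm : n ≤ m)
    (X : Fin m → Finset (Fin n)) (hcard : ∀ i, (X i).card ≤ 3)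
    (hdisc : ¬ FamConnected X)
    (hc : c = (groundSet X).sup
        (fun x => {y | (famGraph X).Reachable x y}.ncard)) :
    DeltaMin X ≤ ((c + 1) / 2 : ℕ) :=
  DeltaMin_le_of_disconnected_general n m c hm X hcard hc
end

section
/- Let 𝒳 ∈ S(n,n,3) be connected and let π be a standard ordering of 𝒳. If Δ(𝒳,π,k) = ⌈n/4⌉ + 1 for some 1 ≤ k ≤ n, then k ≥ ⌈n/4⌉ and |X_{π(1)} ∪ ⋯ ∪ X_{π(k)}| ≥ ⌈n/2⌉ + (k − ⌈n/4⌉). -/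
open Finset

/-! While the union of the sets placed so far does not cover the ground set, connectivity gives an
edge of `G_𝒳` leaving it; the unplaced set containing that edge meets the union, so it brings at
most `c` new points when all sets have size at most `c + 1`, and by minimality neither does the set
placed next. Hence `|X_{π(1)} ∪ ⋯ ∪ X_{π(k)}| ≤ c k + 1`. For `c = 2` and
`Δ(𝒳,π,k) = ⌈n/4⌉ + 1` this gives `⌈n/4⌉ ≤ k`, and the second bound follows from
`⌈n/2⌉ ≤ 2⌈n/4⌉`. -/

section UnionUpTo

variable {α : Type*} [DecidableEq α] {m : ℕ} (X : Fin m → Finset α) (π : Equiv.Perm (Fin m))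

lemma unionUpTo_zero : unionUpTo X π 0 = ∅ := by
  simp [unionUpTo]

lemma subset_unionUpTo {k : ℕ} {i : Fin m} (hi : (i : ℕ) < k) : X (π i) ⊆ unionUpTo X π k :=
  fun _ hx => mem_biUnion.mpr ⟨i, mem_filter.mpr ⟨mem_univ i, hi⟩, hx⟩

lemma unionUpTo_succ {t : ℕ} (ht : t < m) :
    unionUpTo X π (t + 1) = unionUpTo X π t ∪ X (π ⟨t, ht⟩) := by
  ext x
  simp only [unionUpTo, mem_biUnion, mem_filter, mem_univ, true_and, mem_union,
    Nat.lt_succ_iff_lt_or_eq]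
  constructor
  · rintro ⟨i, hi | rfl, hx⟩
    · exact Or.inl ⟨i, hi, hx⟩
    · exact Or.inr hx
  · rintro (⟨i, hi, hx⟩ | hx)
    · exact ⟨i, Or.inl hi, hx⟩
    · exact ⟨⟨t, ht⟩, Or.inr rfl, hx⟩

lemma unionUpTo_succ_of_le {t : ℕ} (ht : m ≤ t) : unionUpTo X π (t + 1) = unionUpTo X π t := by
  simp only [unionUpTo]
  congr 1
  ext i
  simp only [mem_filter, mem_univ, true_and]
  omega

lemma subset_groundSet (j : Fin m) : X j ⊆ groundSet X :=
  fun _ hx => mem_biUnion.mpr ⟨j, mem_univ j, hx⟩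

lemma unionUpTo_subset_groundSet (k : ℕ) : unionUpTo X π k ⊆ groundSet X :=
  biUnion_subset.mpr fun i _ => subset_groundSet X (π i)

variable {X π}

lemma FamConnected.exists_unplaced_inter_unionUpTo_nonempty (hconn : FamConnected X) {t : ℕ}
    (hne : (unionUpTo X π t).Nonempty) (hcov : ¬ groundSet X ⊆ unionUpTo X π t) :
    ∃ j, (∀ i : Fin m, (i : ℕ) < t → π i ≠ j) ∧ (X j ∩ unionUpTo X π t).Nonempty := by
  obtain ⟨y, hy, hyU⟩ := not_subset.mp hcov
  obtain ⟨x, hxU⟩ := hne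
  obtain ⟨p⟩ := hconn.2 x (unionUpTo_subset_groundSet X π t hxU) y hy
  obtain ⟨d, -, hd₁, hd₂⟩ := p.exists_boundary_dart (unionUpTo X π t : Set α) hxU hyU
  obtain ⟨-, j, hj₁, hj₂⟩ := d.adj
  refine ⟨j, ?_, d.fst, mem_inter.mpr ⟨hj₁, hd₁⟩⟩
  rintro i hi rfl
  exact hd₂ (subset_unionUpTo X π hi hj₂)

lemma IsStandardOrdering.card_sdiff_unionUpTo_le {c : ℕ} (hcard : ∀ i, (X i).card ≤ c + 1)
    (hconn : FamConnected X) (hstd : IsStandardOrdering X π) {t : ℕ} (ht : t < m)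
    (hne : (unionUpTo X π t).Nonempty) : (X (π ⟨t, ht⟩) \ unionUpTo X π t).card ≤ c := by
  by_cases hcov : groundSet X ⊆ unionUpTo X π t
  · rw [sdiff_eq_empty_iff_subset.mpr ((subset_groundSet X _).trans hcov), card_empty]
    exact c.zero_le
  obtain ⟨j, hj, hjU⟩ := hconn.exists_unplaced_inter_unionUpTo_nonempty hne hcov
  have ht₁ : 1 ≤ t := by
    rcases Nat.eq_zero_or_pos t with rfl | ht₀
    · simp [unionUpTo_zero] at hne
    · exact ht₀
  have hsplit := card_sdiff_add_card_inter (X j) (unionUpTo X π t)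
  have := hstd t ht ht₁ j hj
  have := hcard j
  have := hjU.card_pos
  omega

lemma IsStandardOrdering.card_unionUpTo_le {c : ℕ} (hcard : ∀ i, (X i).card ≤ c + 1)
    (hconn : FamConnected X) (hstd : IsStandardOrdering X π) (k : ℕ) :
    (unionUpTo X π k).card ≤ c * k + 1 := by
  induction k with
  | zero => simp [unionUpTo_zero]
  | succ t ih =>
    rcases lt_or_ge t m with ht | ht
    · rw [unionUpTo_succ X π ht, ← union_sdiff_self_eq_union, Nat.mul_succ]
      refine (card_union_le _ _).trans ?_
      rcases (unionUpTo X π t).eq_empty_or_nonempty with hempty | hne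
      · rw [hempty, card_empty, sdiff_empty]
        have := hcard (π ⟨t, ht⟩)
        omega
      · have := hstd.card_sdiff_unionUpTo_le hcard hconn ht hne
        omega
    · rw [unionUpTo_succ_of_le X π ht, Nat.mul_succ]
      omega

end UnionUpTo

theorem union_card_lower_bound_general {n : ℕ} (X : Fin n → Finset (Fin n))
    (hcard : ∀ i, (X i).card ≤ 3) (hconn : FamConnected X)
    (π : Equiv.Perm (Fin n)) (hstd : IsStandardOrdering X π)
    (k : ℕ)
    (hdelta : delta X π k = ⌈(n : ℚ) / 4⌉ + 1) :
    ⌈(n : ℚ) / 4⌉ ≤ (k : ℤ) ∧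
      ⌈(n : ℚ) / 2⌉ + ((k : ℤ) - ⌈(n : ℚ) / 4⌉) ≤ ((unionUpTo X π k).card : ℤ) := by
  have hunion : ((unionUpTo X π k).card : ℤ) ≤ 2 * k + 1 := by
    exact_mod_cast hstd.card_unionUpTo_le (c := 2) hcard hconn k
  have hceil : ⌈(n : ℚ) / 2⌉ ≤ 2 * ⌈(n : ℚ) / 4⌉ := by
    rw [Int.ceil_le]
    push_cast
    linarith [Int.le_ceil ((n : ℚ) / 4)]
  unfold delta at hdelta
  constructor <;> linarith

/-- For a connected `𝒳 ∈ S(n,n,3)` and a standard ordering `π`, if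
`Δ(𝒳,π,k) = ⌈n/4⌉ + 1` then `k ≥ ⌈n/4⌉` and
`|X_{π(1)} ∪ ⋯ ∪ X_{π(k)}| ≥ ⌈n/2⌉ + (k − ⌈n/4⌉)`. -/
theorem union_card_lower_bound {n : ℕ} (X : Fin n → Finset (Fin n))
    (hcard : ∀ i, (X i).card ≤ 3) (hconn : FamConnected X)
    (π : Equiv.Perm (Fin n)) (hstd : IsStandardOrdering X π)
    (k : ℕ) (hk : 1 ≤ k) (hkn : k ≤ n)
    (hdelta : delta X π k = ⌈(n : ℚ) / 4⌉ + 1) :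
    ⌈(n : ℚ) / 4⌉ ≤ (k : ℤ) ∧
      ⌈(n : ℚ) / 2⌉ + ((k : ℤ) - ⌈(n : ℚ) / 4⌉) ≤ ((unionUpTo X π k).card : ℤ) :=
  union_card_lower_bound_general X hcard hconn π hstd k hdelta
end
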